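/- arXiv:2502.03800 — 3 statements merged into one kernel-verified Lean document; each statement's English description precedes it below -/
import Mathlib

section
/- For every real λ ≥ 1 and all natural numbers k, j, n, i with j ≤ k and i ≤ n, one has (k choose j)·(n choose i) ≤ λ · Γ(k + λn + 1) / (Γ(j + λi + 1) · Γ(k - j + λ(n - i) + 1)), where the right-hand side is the generalized binomial coefficient C(k + λn, j + λi) defined via the Gamma function. -/
/-!
`C(x, y) := Γ(x + y + 1) / (Γ(x + 1) Γ(y + 1))` is nondecreasing in each argument on `[0, ∞)`,
because log-convexity of `Γ` makes `Γ(u + y) / Γ(u)` nondecreasing in `u`. Hence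
`C(k,j) C(n,i) ≤ C(k+n, j+i) = C(j + i, (k - j) + (n - i)) ≤ C(j + λi, (k - j) + λ(n - i))`
(Vandermonde, then monotonicity), and the factor `λ ≥ 1` only enlarges the right-hand side.
-/

open Real

theorem Nat.choose_mul_choose_le_add_choose (k j n i : ℕ) :
    k.choose j * n.choose i ≤ (k + n).choose (j + i) := by
  rw [Nat.add_choose_eq]
  exact Finset.single_le_sum (f := fun p : ℕ × ℕ => k.choose p.1 * n.choose p.2)
    (fun _ _ => Nat.zero_le _) (Finset.HasAntidiagonal.mem_antidiagonal.2 rfl : (j, i) ∈ _)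

theorem ConvexOn.map_add_sub_map_le {𝕜 : Type*} [Field 𝕜] [LinearOrder 𝕜]
    [IsStrictOrderedRing 𝕜] {s : Set 𝕜} {f : 𝕜 → 𝕜} {x y h : 𝕜} (hf : ConvexOn 𝕜 s f) (hx : x ∈ s)
    (hyh : y + h ∈ s) (hxy : x ≤ y) (hh : 0 ≤ h) :
    f (x + h) - f x ≤ f (y + h) - f y := by
  rcases hh.eq_or_lt with rfl | hh
  · simp
  have hxh : x + h ∈ s := hf.1.ordConnected.out hx hyh ⟨by linarith, by linarith⟩
  have hy : y ∈ s := hf.1.ordConnected.out hx hyh ⟨hxy, by linarith⟩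
  have left := hf.secant_mono hx hxh hyh (by linarith) (by linarith) (by linarith)
  have right := hf.secant_mono hyh hx hy (by linarith) (by linarith) hxy
  refine (div_le_div_iff_of_pos_right hh).1 ?_
  calc (f (x + h) - f x) / h = (f (x + h) - f x) / (x + h - x) := by rw [add_sub_cancel_left]
    _ ≤ (f (y + h) - f x) / (y + h - x) := left
    _ = (f x - f (y + h)) / (x - (y + h)) := by rw [← neg_div_neg_eq]; ring_nf
    _ ≤ (f y - f (y + h)) / (y - (y + h)) := right
    _ = (f (y + h) - f y) / h := by rw [← neg_div_neg_eq]; ring_nf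

theorem Real.Gamma_add_div_Gamma_le {x y h : ℝ} (hx : 0 < x) (hxy : x ≤ y) (hh : 0 ≤ h) :
    Gamma (x + h) / Gamma x ≤ Gamma (y + h) / Gamma y := by
  have hy : 0 < y := hx.trans_le hxy
  have hlog := convexOn_log_Gamma.map_add_sub_map_le hx (by simp only [Set.mem_Ioi]; linarith)
    hxy hh
  simp only [Function.comp_apply] at hlog
  have hpos {t : ℝ} (ht : 0 < t) : Gamma t ≠ 0 := (Gamma_pos_of_pos ht).ne'
  rwa [← log_le_log_iff (by positivity) (by positivity), log_div (hpos (by linarith)) (hpos hx),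
    log_div (hpos (by linarith)) (hpos hy)]

/-- `C(x + y, x)` in the notation of the statement. -/
noncomputable def generalizedChoose (x y : ℝ) : ℝ :=
  Gamma (x + y + 1) / (Gamma (x + 1) * Gamma (y + 1))

theorem generalizedChoose_comm (x y : ℝ) : generalizedChoose x y = generalizedChoose y x := by
  rw [generalizedChoose, generalizedChoose, add_comm x y, mul_comm]

theorem generalizedChoose_natCast (m n : ℕ) :
    generalizedChoose m n = ((m + n).choose m : ℝ) := by
  rw [Nat.cast_add_choose, generalizedChoose, ← Nat.cast_add, Gamma_nat_eq_factorial,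
    Gamma_nat_eq_factorial, Gamma_nat_eq_factorial]

theorem generalizedChoose_mono_left {x x' y : ℝ} (hx : -1 < x) (hxx' : x ≤ x') (hy : 0 ≤ y) :
    generalizedChoose x y ≤ generalizedChoose x' y := by
  have hratio := Gamma_add_div_Gamma_le (by linarith : 0 < x + 1) (by linarith : x + 1 ≤ x' + 1) hy
  simp only [generalizedChoose, ← div_div]
  rw [add_right_comm x, add_right_comm x']
  exact div_le_div_of_nonneg_right hratio (Gamma_pos_of_pos (by linarith : 0 < y + 1)).le

theorem generalizedChoose_mono {x x' y y' : ℝ} (hx : 0 ≤ x) (hxx' : x ≤ x') (hy : 0 ≤ y)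
    (hyy' : y ≤ y') : generalizedChoose x y ≤ generalizedChoose x' y' :=
  calc generalizedChoose x y ≤ generalizedChoose x' y :=
        generalizedChoose_mono_left (by linarith) hxx' hy
    _ = generalizedChoose y x' := generalizedChoose_comm _ _
    _ ≤ generalizedChoose y' x' := generalizedChoose_mono_left (by linarith) hyy' (by linarith)
    _ = generalizedChoose x' y' := generalizedChoose_comm _ _

theorem binom_prod_le_generalized_binom (lam : ℝ) (hlam : 1 ≤ lam)
    (k j n i : ℕ) (hj : j ≤ k) (hi : i ≤ n) :
    (k.choose j : ℝ) * (n.choose i : ℝ) ≤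
      lam * Real.Gamma ((k : ℝ) + lam * n + 1) /
        (Real.Gamma ((j : ℝ) + lam * i + 1) *
          Real.Gamma (((k : ℝ) - j) + lam * ((n : ℝ) - i) + 1)) := by
  have hvandermonde : (k.choose j : ℝ) * n.choose i ≤
      generalizedChoose ((j + i : ℕ) : ℝ) ((k - j + (n - i) : ℕ) : ℝ) := by
    rw [generalizedChoose_natCast, show j + i + (k - j + (n - i)) = k + n by omega]
    exact_mod_cast Nat.choose_mul_choose_le_add_choose k j n i
  have hmono : generalizedChoose ((j + i : ℕ) : ℝ) ((k - j + (n - i) : ℕ) : ℝ) ≤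
      generalizedChoose (j + lam * i) (k - j + lam * (n - i)) := by
    have hjk : (j : ℝ) ≤ k := by exact_mod_cast hj
    have hin : (i : ℝ) ≤ n := by exact_mod_cast hi
    push_cast [Nat.cast_sub hj, Nat.cast_sub hi]
    apply generalizedChoose_mono <;> nlinarith
  have hrhs : lam * Gamma (k + lam * n + 1) /
      (Gamma (j + lam * i + 1) * Gamma (k - j + lam * (n - i) + 1)) =
      lam * generalizedChoose (j + lam * i) (k - j + lam * (n - i)) := by
    rw [generalizedChoose, mul_div_assoc]
    congr 3
    ring
  rw [hrhs]
  have hbound := hvandermonde.trans hmono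
  exact hbound.trans (le_mul_of_one_le_left ((by positivity : (0 : ℝ) ≤ _).trans hbound) hlam)
end

section
/- For every real λ ≥ 1 and natural numbers k, n, j ≤ k, i ≤ n, the quantity (k + n + 1) · C(k + n, j + i) is at most (k + λn + 1) · C(k + λn, j + λi), where C denotes the generalized binomial coefficient defined via Gamma functions. -/
/-!
Writing `I(a, b) = ∫₀¹ tᵃ (1 - t)ᵇ dt`, Euler's Beta identity gives
`(a + b + 1) · Γ(a + b + 1) / (Γ(a + 1) Γ(b + 1)) = I(a, b)⁻¹`.
On `[0, 1]` the integrand decreases when the exponents grow, and passing from `λ = 1` to `λ ≥ 1`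
only grows both exponents `j + λ i` and `(k - j) + λ (n - i)`; hence `I` decreases and its
inverse increases.
-/

open Real

/-- `shiftedBetaIntegral a b = B(a + 1, b + 1)`. -/
noncomputable def shiftedBetaIntegral (a b : ℝ) : ℝ := ∫ t in (0 : ℝ)..1, t ^ a * (1 - t) ^ b

lemma continuous_rpow_mul_one_sub_rpow {a b : ℝ} (ha : 0 ≤ a) (hb : 0 ≤ b) :
    Continuous fun t : ℝ => t ^ a * (1 - t) ^ b :=
  (continuous_rpow_const ha).mul ((continuous_rpow_const hb).comp (continuous_const.sub continuous_id))

lemma shiftedBetaIntegral_pos {a b : ℝ} (ha : 0 ≤ a) (hb : 0 ≤ b) :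
    0 < shiftedBetaIntegral a b :=
  intervalIntegral.intervalIntegral_pos_of_pos_on
    ((continuous_rpow_mul_one_sub_rpow ha hb).intervalIntegrable 0 1)
    (fun _ ht => mul_pos (rpow_pos_of_pos ht.1 a) (rpow_pos_of_pos (sub_pos.2 ht.2) b))
    zero_lt_one

lemma shiftedBetaIntegral_anti {a b a' b' : ℝ} (ha : 0 ≤ a) (hb : 0 ≤ b) (haa' : a ≤ a')
    (hbb' : b ≤ b') : shiftedBetaIntegral a' b' ≤ shiftedBetaIntegral a b := by
  refine intervalIntegral.integral_mono_on zero_le_one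
    ((continuous_rpow_mul_one_sub_rpow (ha.trans haa') (hb.trans hbb')).intervalIntegrable 0 1)
    ((continuous_rpow_mul_one_sub_rpow ha hb).intervalIntegrable 0 1) fun t ht => ?_
  have h1t : 0 ≤ 1 - t := sub_nonneg.2 ht.2
  exact mul_le_mul (rpow_le_rpow_of_exponent_ge' ht.1 ht.2 ha haa')
    (rpow_le_rpow_of_exponent_ge' h1t (by linarith [ht.1]) hb hbb')
    (rpow_nonneg h1t _) (rpow_nonneg ht.1 _)

lemma betaIntegral_ofReal_add_one (a b : ℝ) :
    Complex.betaIntegral ((a + 1 : ℝ) : ℂ) ((b + 1 : ℝ) : ℂ) = (shiftedBetaIntegral a b : ℂ) := by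
  rw [Complex.betaIntegral, shiftedBetaIntegral, ← intervalIntegral.integral_ofReal]
  refine intervalIntegral.integral_congr fun t ht => ?_
  rw [Set.uIcc_of_le zero_le_one] at ht
  push_cast
  rw [add_sub_cancel_right, add_sub_cancel_right, ← Complex.ofReal_cpow ht.1, ← Complex.ofReal_one,
    ← Complex.ofReal_sub, ← Complex.ofReal_cpow (sub_nonneg.2 ht.2)]

lemma Gamma_mul_Gamma_eq_shiftedBetaIntegral {a b : ℝ} (ha : -1 < a) (hb : -1 < b) :
    Gamma (a + 1) * Gamma (b + 1) = Gamma (a + b + 2) * shiftedBetaIntegral a b := by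
  have h := Complex.Gamma_mul_Gamma_eq_betaIntegral (s := ((a + 1 : ℝ) : ℂ))
    (t := ((b + 1 : ℝ) : ℂ)) (by simp; linarith) (by simp; linarith)
  rw [betaIntegral_ofReal_add_one, ← Complex.ofReal_add, show a + 1 + (b + 1) = a + b + 2 by ring,
    Complex.Gamma_ofReal, Complex.Gamma_ofReal, Complex.Gamma_ofReal] at h
  exact_mod_cast h

lemma mul_Gamma_div_eq_inv_shiftedBetaIntegral {a b : ℝ} (ha : 0 ≤ a) (hb : 0 ≤ b) :
    (a + b + 1) * (Gamma (a + b + 1) / (Gamma (a + 1) * Gamma (b + 1))) =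
      (shiftedBetaIntegral a b)⁻¹ := by
  have hΓ : Gamma (a + b + 2) = (a + b + 1) * Gamma (a + b + 1) := by
    rw [← Gamma_add_one (by positivity)]; ring_nf
  have hβ := Gamma_mul_Gamma_eq_shiftedBetaIntegral (a := a) (b := b) (by linarith) (by linarith)
  have hΓa : 0 < Gamma (a + 1) := Gamma_pos_of_pos (by linarith)
  have hΓb : 0 < Gamma (b + 1) := Gamma_pos_of_pos (by linarith)
  have hB := shiftedBetaIntegral_pos ha hb
  rw [hΓ] at hβ
  field_simp
  linarith

theorem generalized_binom_monotone_in_lambda (lam : ℝ) (hlam : 1 ≤ lam)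
    (k n j i : ℕ) (hj : j ≤ k) (hi : i ≤ n) :
    ((k : ℝ) + n + 1) *
        (Real.Gamma ((k : ℝ) + n + 1) /
          (Real.Gamma ((j : ℝ) + i + 1) *
            Real.Gamma (((k : ℝ) - j) + ((n : ℝ) - i) + 1))) ≤
      ((k : ℝ) + lam * n + 1) *
        (Real.Gamma ((k : ℝ) + lam * n + 1) /
          (Real.Gamma ((j : ℝ) + lam * i + 1) *
            Real.Gamma (((k : ℝ) - j) + lam * ((n : ℝ) - i) + 1))) := by
  have hkj : (0 : ℝ) ≤ k - j := sub_nonneg.2 (by exact_mod_cast hj)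
  have hni : (0 : ℝ) ≤ n - i := sub_nonneg.2 (by exact_mod_cast hi)
  have hi_le : (i : ℝ) ≤ lam * i := le_mul_of_one_le_left i.cast_nonneg hlam
  have hni_le : (n : ℝ) - i ≤ lam * (n - i) := le_mul_of_one_le_left hni hlam
  have ha : (0 : ℝ) ≤ j + i := by positivity
  have hb : (0 : ℝ) ≤ (k - j) + (n - i) := add_nonneg hkj hni
  have ha_le : (j : ℝ) + i ≤ j + lam * i := by linarith
  have hb_le : (k - j : ℝ) + (n - i) ≤ (k - j) + lam * (n - i) := by linarith
  rw [show (k : ℝ) + n = (j + i) + ((k - j) + (n - i)) by ring,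
    show (k : ℝ) + lam * n = (j + lam * i) + ((k - j) + lam * (n - i)) by ring,
    mul_Gamma_div_eq_inv_shiftedBetaIntegral ha hb,
    mul_Gamma_div_eq_inv_shiftedBetaIntegral (ha.trans ha_le) (hb.trans hb_le)]
  exact inv_anti₀ (shiftedBetaIntegral_pos (ha.trans ha_le) (hb.trans hb_le))
    (shiftedBetaIntegral_anti ha hb ha_le hb_le)
end

section
/- Let λ > 1 and define a₀ = 1 and a_k = (λ(k−1))!/(λk)! = Γ(λ(k−1)+1)/Γ(λk+1) for k ≥ 1. Then the sequence (a_k) is positive and nonincreasing, Σ_{k≥1} a_k < ∞, and for every p ≥ 1 one has p·a_p + Σ_{k>p} a_k ≤ (λ/(λ−1) + 1)·p·a_p. -/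
/-!
With `G_d(x) = Γ(x) / Γ(x + d)` we have `a_{k+1} = G_λ(λk + 1)`. Log-convexity of `Γ` makes each
`G_d` (`d ≥ 0`) antitone on `(0, ∞)`, which gives `a_{k+2} ≤ a_{k+1}` and lets us compare
`a_{p+1+k}` with `G_λ(λp + 1 + k)`. The functional equation gives the telescoping identity
`G_{d+1}(x) = (G_d(x) - G_d(x + 1)) / d`, so the tail sum is at most `G_{λ-1}(λp + 1) / (λ - 1)`,
and one more use of antitonicity bounds this by `λ p a_p / (λ - 1)`.
-/

open Real Finset Set

theorem ConvexOn.increment_le_increment {s : Set ℝ} {f : ℝ → ℝ} (hf : ConvexOn ℝ s f)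
    {x y d : ℝ} (hx : x ∈ s) (hyd : y + d ∈ s) (hxy : x ≤ y) (hd : 0 ≤ d) :
    f (x + d) - f x ≤ f (y + d) - f y := by
  rcases hd.eq_or_lt with rfl | hd
  · simp
  have hmem : ∀ z ∈ Icc x (y + d), z ∈ s := fun z hz => hf.1.ordConnected.out hx hyd hz
  have hxd : x + d ∈ s := hmem _ ⟨by linarith, by linarith⟩
  have hy : y ∈ s := hmem _ ⟨hxy, by linarith⟩
  have h₁ : slope f x (x + d) ≤ slope f x (y + d) :=
    hf.slope_mono hx ⟨hxd, (by linarith : x < x + d).ne'⟩ ⟨hyd, (by linarith : x < y + d).ne'⟩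
      (by linarith)
  have h₂ : slope f (y + d) x ≤ slope f (y + d) y :=
    hf.slope_mono hyd ⟨hx, (by linarith : x < y + d).ne⟩ ⟨hy, (by linarith : y < y + d).ne⟩ hxy
  rw [slope_comm f (y + d) x, slope_comm f (y + d) y] at h₂
  have h := h₁.trans h₂
  rw [slope_def_field, slope_def_field, add_sub_cancel_left, add_sub_cancel_left] at h
  exact (div_le_div_iff_of_pos_right hd).mp h

noncomputable def gammaRatio (d x : ℝ) : ℝ := Gamma x / Gamma (x + d)

section GammaRatio

variable {d x : ℝ}

theorem gammaRatio_pos (hx : 0 < x) (hxd : 0 < x + d) : 0 < gammaRatio d x :=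
  div_pos (Gamma_pos_of_pos hx) (Gamma_pos_of_pos hxd)

theorem gammaRatio_antitoneOn (hd : 0 ≤ d) : AntitoneOn (gammaRatio d) (Ioi 0) := by
  intro x (hx : 0 < x) y (hy : 0 < y) hxy
  have hlog := convexOn_log_Gamma.increment_le_increment hx
    (show 0 < y + d by linarith) hxy hd
  simp only [Function.comp_apply] at hlog
  rw [← log_le_log_iff (gammaRatio_pos hy (by linarith)) (gammaRatio_pos hx (by linarith)),
    gammaRatio, gammaRatio, log_div (Gamma_pos_of_pos hy).ne' (Gamma_pos_of_pos (by linarith)).ne',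
    log_div (Gamma_pos_of_pos hx).ne' (Gamma_pos_of_pos (by linarith)).ne']
  linarith

theorem gammaRatio_eq_mul_gammaRatio_add_one (hxd : x + d ≠ 0) :
    gammaRatio d x = (x + d) * gammaRatio (d + 1) x := by
  rw [gammaRatio, gammaRatio, ← add_assoc, Gamma_add_one hxd, ← mul_div_assoc,
    mul_div_mul_left _ _ hxd]

theorem gammaRatio_add_one (hx : x ≠ 0) : gammaRatio d (x + 1) = x * gammaRatio (d + 1) x := by
  rw [gammaRatio, gammaRatio, Gamma_add_one hx, add_right_comm, add_assoc, mul_div_assoc]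

theorem gammaRatio_sub_gammaRatio_add_one (hx : x ≠ 0) (hxd : x + d ≠ 0) :
    gammaRatio d x - gammaRatio d (x + 1) = d * gammaRatio (d + 1) x := by
  rw [gammaRatio_add_one hx, gammaRatio_eq_mul_gammaRatio_add_one hxd]
  ring

theorem sum_range_gammaRatio_le (hd : 0 < d) (hx : 0 < x) (N : ℕ) :
    ∑ k ∈ range N, gammaRatio (d + 1) (x + k) ≤ gammaRatio d x / d := by
  have hxk (k : ℕ) : 0 < x + k := by positivity
  calc ∑ k ∈ range N, gammaRatio (d + 1) (x + k)
      = ∑ k ∈ range N, (gammaRatio d (x + k) - gammaRatio d (x + (k + 1 : ℕ))) / d := by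
        refine sum_congr rfl fun k _ => ?_
        rw [Nat.cast_succ, ← add_assoc,
          gammaRatio_sub_gammaRatio_add_one (hxk k).ne' (by linarith [hxk k])]
        field_simp
    _ = (gammaRatio d x - gammaRatio d (x + N)) / d := by
        rw [← sum_div, sum_range_sub' (fun k : ℕ => gammaRatio d (x + k))]
        simp
    _ ≤ gammaRatio d x / d := by
        gcongr
        linarith [gammaRatio_pos (hxk N) (by linarith [hxk N] : 0 < x + N + d)]

end GammaRatio

noncomputable def gevreySeq (lam : ℝ) (k : ℕ) : ℝ :=
  if k = 0 then 1 else Gamma (lam * ((k : ℝ) - 1) + 1) / Gamma (lam * k + 1)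

section GevreySeq

variable {lam : ℝ}

theorem gevreySeq_succ (k : ℕ) : gevreySeq lam (k + 1) = gammaRatio lam (lam * k + 1) := by
  simp only [gevreySeq, gammaRatio, Nat.succ_ne_zero, if_false, Nat.cast_succ]
  ring_nf

theorem gevreySeq_pos (hlam : 0 ≤ lam) (k : ℕ) : 0 < gevreySeq lam k := by
  cases k with
  | zero => simp [gevreySeq]
  | succ k => rw [gevreySeq_succ]; exact gammaRatio_pos (by positivity) (by positivity)

theorem gevreySeq_succ_le (hlam : 1 ≤ lam) (k : ℕ) : gevreySeq lam (k + 1) ≤ gevreySeq lam k := by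
  cases k with
  | zero =>
    have hGamma : 1 ≤ Gamma (1 + lam) := by
      have h := Gamma_strictMonoOn_Ici.monotoneOn (Set.mem_Ici.2 le_rfl)
        (Set.mem_Ici.2 (by linarith : (2 : ℝ) ≤ 1 + lam)) (by linarith)
      rwa [Gamma_two] at h
    rw [gevreySeq_succ, gammaRatio]
    simpa [gevreySeq] using inv_le_one_of_one_le₀ hGamma
  | succ k =>
    rw [gevreySeq_succ, gevreySeq_succ]
    exact gammaRatio_antitoneOn (by linarith) (Set.mem_Ioi.2 (by positivity))
      (Set.mem_Ioi.2 (by positivity)) (by push_cast; nlinarith)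

theorem sum_range_gevreySeq_le (hlam : 1 < lam) (p N : ℕ) :
    ∑ k ∈ range N, gevreySeq lam (p + 1 + k) ≤ gammaRatio (lam - 1) (lam * p + 1) / (lam - 1) :=
  calc ∑ k ∈ range N, gevreySeq lam (p + 1 + k)
      ≤ ∑ k ∈ range N, gammaRatio (lam - 1 + 1) (lam * p + 1 + k) := by
        refine sum_le_sum fun k _ => ?_
        rw [sub_add_cancel, add_right_comm, gevreySeq_succ]
        exact gammaRatio_antitoneOn (by linarith) (Set.mem_Ioi.2 (by positivity))
          (Set.mem_Ioi.2 (by positivity))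
          (by push_cast; nlinarith [(Nat.cast_nonneg k : (0 : ℝ) ≤ k)])
    _ ≤ gammaRatio (lam - 1) (lam * p + 1) / (lam - 1) :=
        sum_range_gammaRatio_le (by linarith) (by positivity) N

theorem gammaRatio_sub_one_le_mul_gevreySeq (hlam : 1 ≤ lam) {p : ℕ} (hp : 1 ≤ p) :
    gammaRatio (lam - 1) (lam * p + 1) ≤ lam * p * gevreySeq lam p := by
  obtain ⟨q, rfl⟩ := Nat.exists_eq_add_of_le' hp
  calc gammaRatio (lam - 1) (lam * ↑(q + 1) + 1)
      ≤ gammaRatio (lam - 1) (lam * q + 1) :=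
        gammaRatio_antitoneOn (by linarith) (Set.mem_Ioi.2 (by positivity))
          (Set.mem_Ioi.2 (by positivity)) (by push_cast; linarith)
    _ = (lam * q + 1 + (lam - 1)) * gammaRatio (lam - 1 + 1) (lam * q + 1) :=
        gammaRatio_eq_mul_gammaRatio_add_one (by positivity)
    _ = lam * ↑(q + 1) * gevreySeq lam (q + 1) := by
        rw [sub_add_cancel, gevreySeq_succ]
        push_cast
        ring

theorem summable_gevreySeq_succ (hlam : 1 < lam) : Summable fun k => gevreySeq lam (k + 1) := by
  simpa [add_comm] using summable_of_sum_range_le (fun k => (gevreySeq_pos (by linarith) _).le)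
    (sum_range_gevreySeq_le hlam 0)

theorem tsum_gevreySeq_le (hlam : 1 < lam) {p : ℕ} (hp : 1 ≤ p) :
    ∑' k, gevreySeq lam (p + 1 + k) ≤ lam / (lam - 1) * p * gevreySeq lam p :=
  calc ∑' k, gevreySeq lam (p + 1 + k)
      ≤ gammaRatio (lam - 1) (lam * p + 1) / (lam - 1) :=
        Real.tsum_le_of_sum_range_le (fun _ => (gevreySeq_pos (by linarith) _).le)
          (sum_range_gevreySeq_le hlam p)
    _ ≤ lam * p * gevreySeq lam p / (lam - 1) :=
        div_le_div_of_nonneg_right (gammaRatio_sub_one_le_mul_gevreySeq hlam.le hp) (by linarith)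
    _ = lam / (lam - 1) * p * gevreySeq lam p := by ring

end GevreySeq

theorem gevrey_sequence_properties (lam : ℝ) (hlam : 1 < lam) :
    let a : ℕ → ℝ := fun k =>
      if k = 0 then 1 else Real.Gamma (lam * ((k : ℝ) - 1) + 1) / Real.Gamma (lam * k + 1)
    (∀ k : ℕ, 0 < a k) ∧
    (∀ k : ℕ, a (k + 1) ≤ a k) ∧
    Summable (fun k : ℕ => a (k + 1)) ∧
    ∀ p : ℕ, 1 ≤ p →
      (p : ℝ) * a p + ∑' k : ℕ, a (p + 1 + k) ≤ (lam / (lam - 1) + 1) * p * a p := by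
  intro a
  refine ⟨gevreySeq_pos (by linarith), gevreySeq_succ_le hlam.le, summable_gevreySeq_succ hlam,
    fun p hp => ?_⟩
  change (p : ℝ) * gevreySeq lam p + ∑' k, gevreySeq lam (p + 1 + k) ≤
    (lam / (lam - 1) + 1) * p * gevreySeq lam p
  linarith [tsum_gevreySeq_le hlam hp]
end
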